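/- arXiv:1503.00498 — 3 statements merged into one kernel-verified Lean document; each statement's English description precedes it below -/
import Mathlib

section
/- Let $U$ be a bounded open interval $(a,b)$ in $\mathbb{R}$ (with $a < b$), and let $Z$ be the mapping cylinder of the inclusion $i \colon U \to \mathbb{R}$, i.e. the quotient of the disjoint union $(U \times [0,1]) \sqcup \mathbb{R}$ by the relation identifying $(u,1)$ with $i(u) \in \mathbb{R}$ for every $u \in U$, equipped with the quotient topology. Then $Z$ is not metrizable. -/
open Set Filter Topology

namespace MappingCylinderAux

/-- The underlying type of the mapping cylinder construction. -/
abbrev X (a b : ℝ) := (Set.Ioo a b × unitInterval) ⊕ ℝ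

/-- The gluing relation. -/
abbrev R (a b : ℝ) : X a b → X a b → Prop := fun x y =>
  ∃ u : Set.Ioo a b, x = Sum.inl (u, 1) ∧ y = Sum.inr (u : ℝ)

/-- A normalization map collapsing `(u,1)` to `inr u`. -/
noncomputable def f (a b : ℝ) : X a b → X a b
  | Sum.inl (u, t) => if t = 1 then Sum.inr (u : ℝ) else Sum.inl (u, t)
  | Sum.inr x => Sum.inr x

lemma f_resp (a b : ℝ) : ∀ x y, R a b x y → f a b x = f a b y := by
  rintro x y ⟨u, rfl, rfl⟩; simp [f]

lemma f_eq_of_mk_eq {a b : ℝ} {x y : X a b}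
    (h : Quot.mk (R a b) x = Quot.mk (R a b) y) : f a b x = f a b y :=
  congrArg (Quot.lift (f a b) (f_resp a b)) h

lemma inr_ne_inl {a b : ℝ} (x : ℝ) (u : Set.Ioo a b) (t : unitInterval) (ht : t ≠ 1) :
    Quot.mk (R a b) (Sum.inr x) ≠ Quot.mk (R a b) (Sum.inl (u, t)) := by
  intro h
  have := f_eq_of_mk_eq h
  simp [f, ht] at this

lemma inl_inj {a b : ℝ} {u v : Set.Ioo a b} {t s : unitInterval} (hs : s ≠ 1)
    (h : Quot.mk (R a b) (Sum.inl (u, t)) = Quot.mk (R a b) (Sum.inl (v, s))) :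
    u = v ∧ t = s := by
  have hf := f_eq_of_mk_eq h
  by_cases ht : t = 1
  · simp [f, ht, hs] at hf
  · simp [f, ht, hs] at hf
    exact ⟨hf.1, hf.2⟩

lemma exists_lt_one_mem {B : Set unitInterval} (hB : B ∈ 𝓝 (1 : unitInterval)) :
    ∃ t ∈ B, (t : ℝ) < 1 := by
  rw [nhds_subtype] at hB
  obtain ⟨U, hU, hUB⟩ := hB
  obtain ⟨ε, hε, hball⟩ := Metric.mem_nhds_iff.1 hU
  have hm : 0 < min ε 1 := lt_min hε one_pos
  have hm1 : min ε 1 ≤ 1 := min_le_right _ _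
  refine ⟨⟨1 - min ε 1 / 2, by constructor <;> nlinarith⟩, hUB ?_, by
    show (1 - min ε 1 / 2 : ℝ) < 1
    nlinarith⟩
  apply hball
  simp only [Metric.mem_ball, Real.dist_eq, Set.Icc.coe_one]
  rw [abs_sub_lt_iff]
  constructor <;> nlinarith [min_le_left ε 1]

end MappingCylinderAux

open MappingCylinderAux in
/-- The mapping cylinder of the inclusion of a bounded open interval `(a, b)` into `ℝ`:
the quotient of `((a, b) × [0, 1]) ⊕ ℝ` identifying `(u, 1)` with `u ∈ ℝ`, with the
quotient topology. It is not metrizable. -/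
theorem mappingCylinder_Ioo_not_metrizable (a b : ℝ) (hab : a < b) :
    ¬ TopologicalSpace.MetrizableSpace
      (Quot (fun x y : (Set.Ioo a b × unitInterval) ⊕ ℝ =>
        ∃ u : Set.Ioo a b, x = Sum.inl (u, 1) ∧ y = Sum.inr (u : ℝ))) := by
  show ¬ TopologicalSpace.MetrizableSpace (Quot (R a b))
  intro hmet
  haveI : FirstCountableTopology (Quot (R a b)) := inferInstance
  set z : Quot (R a b) := Quot.mk (R a b) (Sum.inr a) with hz
  obtain ⟨s, hs⟩ := (𝓝 z).exists_antitone_basis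
  -- Choose points (uₙ, tₙ) with tₙ < 1, uₙ close to a, lying in s n.
  have key : ∀ n : ℕ, ∃ (u : Set.Ioo a b) (t : unitInterval),
      (t : ℝ) < 1 ∧ (u : ℝ) < a + (b - a) / (n + 2) ∧
      Quot.mk (R a b) (Sum.inl (u, t)) ∈ s n := by
    intro n
    have hsn : s n ∈ 𝓝 z := hs.toHasBasis.mem_of_mem trivial
    have hzO : z ∈ interior (s n) := mem_interior_iff_mem_nhds.2 hsn
    have hpre : IsOpen (Quot.mk (R a b) ⁻¹' interior (s n)) :=
      isOpen_interior.preimage continuous_quot_mk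
    rw [isOpen_sum_iff] at hpre
    obtain ⟨hl, hr2⟩ := hpre
    have ha : a ∈ Sum.inr ⁻¹' (Quot.mk (R a b) ⁻¹' interior (s n)) := hzO
    obtain ⟨ε, hε, hball⟩ := Metric.isOpen_iff.1 hr2 a ha
    have hn2 : (1 : ℝ) ≤ (n : ℝ) + 2 := by
      have := Nat.cast_nonneg (α := ℝ) n; linarith
    have hfrac : 0 < (b - a) / ((n : ℝ) + 2) := div_pos (by linarith) (by positivity)
    have hfrac' : (b - a) / ((n : ℝ) + 2) ≤ b - a :=
      div_le_self (by linarith) hn2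
    set δ := min ε ((b - a) / ((n : ℝ) + 2)) with hδdef
    have hδ : 0 < δ := lt_min hε hfrac
    have hδε : δ ≤ ε := min_le_left _ _
    have hδf : δ ≤ (b - a) / ((n : ℝ) + 2) := min_le_right _ _
    set u : Set.Ioo a b := ⟨a + δ / 2, by constructor <;> nlinarith⟩ with hu
    have hmemr : Sum.inr (u : ℝ) ∈ Quot.mk (R a b) ⁻¹' interior (s n) := by
      apply hball
      simp only [Metric.mem_ball, Real.dist_eq, hu]
      rw [show a + δ / 2 - a = δ / 2 by ring, abs_of_pos (by linarith)]
      linarith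
    have hmeml : Sum.inl (u, (1 : unitInterval)) ∈
        Quot.mk (R a b) ⁻¹' interior (s n) := by
      show Quot.mk (R a b) _ ∈ interior (s n)
      rw [Quot.sound ⟨u, rfl, rfl⟩]
      exact hmemr
    have hnhds : Sum.inl ⁻¹' (Quot.mk (R a b) ⁻¹' interior (s n)) ∈
        𝓝 ((u, (1 : unitInterval)) : Set.Ioo a b × unitInterval) := hl.mem_nhds hmeml
    rw [mem_nhds_prod_iff] at hnhds
    obtain ⟨A, hA, B, hB, hAB⟩ := hnhds
    obtain ⟨t, htB, ht1⟩ := exists_lt_one_mem hB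
    refine ⟨u, t, ht1, ?_, interior_subset (hAB ⟨mem_of_mem_nhds hA, htB⟩)⟩
    show a + δ / 2 < a + (b - a) / ((n : ℝ) + 2)
    linarith
  choose un tn htn1 hun hmem using key
  -- The open set avoiding all chosen points.
  set W : Set (Quot (R a b)) :=
    {w | ∀ n : ℕ, ∀ t : unitInterval, (t : ℝ) ≤ (tn n : ℝ) →
      w ≠ Quot.mk (R a b) (Sum.inl (un n, t))} with hW
  have htne1 : ∀ n (t : unitInterval), (t : ℝ) ≤ (tn n : ℝ) → t ≠ 1 := by
    intro n t ht h1
    rw [h1] at ht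
    simp only [Set.Icc.coe_one] at ht
    linarith [htn1 n]
  have hzW : z ∈ W := by
    intro n t ht
    exact inr_ne_inl a (un n) t (htne1 n t ht)
  have hWopen : IsOpen W := by
    rw [← isQuotientMap_quot_mk.isOpen_preimage, isOpen_sum_iff]
    constructor
    · have heq : Sum.inl ⁻¹' (Quot.mk (R a b) ⁻¹' W) =
          (⋃ n, {un n} ×ˢ {t : unitInterval | (t : ℝ) ≤ (tn n : ℝ)})ᶜ := by
        ext ⟨u, t⟩
        simp only [Set.mem_preimage, Set.mem_compl_iff, Set.mem_iUnion, Set.mem_prod,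
          Set.mem_singleton_iff, Set.mem_setOf_eq, not_exists, not_and, hW]
        constructor
        · intro h n hu ht
          exact h n t ht (by rw [hu])
        · intro h n t' ht' heq2
          obtain ⟨hu, hts⟩ := inl_inj (htne1 n t' ht') heq2
          exact h n hu (hts ▸ ht')
      rw [heq, isOpen_compl_iff]
      apply LocallyFinite.isClosed_iUnion
      · intro ⟨u, t⟩
        have hua : a < (u : ℝ) := u.2.1
        refine ⟨{p : Set.Ioo a b × unitInterval | (a + u) / 2 < (p.1 : ℝ)}, ?_, ?_⟩
        · have hop : IsOpen {p : Set.Ioo a b × unitInterval | (a + u) / 2 < (p.1 : ℝ)} := by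
            have : Continuous fun p : Set.Ioo a b × unitInterval => (p.1 : ℝ) :=
              continuous_subtype_val.comp continuous_fst
            exact isOpen_Ioi.preimage this
          exact hop.mem_nhds (by simp only [Set.mem_setOf_eq]; linarith)
        · apply Set.Finite.subset (Set.finite_Iio ⌈2 * (b - a) / ((u : ℝ) - a)⌉₊)
          intro n hn
          obtain ⟨⟨v, tv⟩, ⟨hv1, -⟩, hv2⟩ := hn
          simp only [Set.mem_setOf_eq] at hv2
          have hv1' : v = un n := hv1
          rw [hv1'] at hv2
          -- hv2 : (a + u)/2 < un n ; hun n : un n < a + (b-a)/(n+2)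
          have h1 : (a + (u : ℝ)) / 2 < a + (b - a) / ((n : ℝ) + 2) :=
            lt_trans hv2 (hun n)
          have h2 : ((u : ℝ) - a) / 2 < (b - a) / ((n : ℝ) + 2) := by linarith
          have hn2 : (0 : ℝ) < (n : ℝ) + 2 := by positivity
          have h3 : ((n : ℝ) + 2) * (((u : ℝ) - a) / 2) < b - a := by
            rw [div_lt_div_iff₀ (by norm_num) hn2] at h2
            nlinarith
          have h4 : (n : ℝ) < 2 * (b - a) / ((u : ℝ) - a) := by
            rw [lt_div_iff₀ (by linarith)]
            nlinarith
          exact Set.mem_Iio.2 (Nat.lt_ceil.2 h4)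
      · intro n
        exact isClosed_singleton.prod (isClosed_Iic.preimage continuous_subtype_val)
    · have heq : Sum.inr ⁻¹' (Quot.mk (R a b) ⁻¹' W) = Set.univ := by
        apply Set.eq_univ_of_forall
        intro x n t ht
        exact inr_ne_inl x (un n) t (htne1 n t ht)
      rw [heq]; exact isOpen_univ
  obtain ⟨n, -, hsub⟩ := hs.toHasBasis.mem_iff.1 (hWopen.mem_nhds hzW)
  exact hsub (hmem n) n (tn n) le_rfl rfl
end

section
/- Let $U$ be a bounded open interval $(a,b)$ in $\mathbb{R}$ (with $a < b$), and let $Z$ be the mapping cylinder of the inclusion $i \colon U \to \mathbb{R}$, i.e. the quotient of the disjoint union $(U \times [0,1]) \sqcup \mathbb{R}$ by the relation identifying $(u,1)$ with $i(u) \in \mathbb{R}$ for every $u \in U$, equipped with the quotient topology. Then $Z$ is not homeomorphic to a subspace of $\mathbb{R}^2$; that is, there is no topological embedding (continuous injective map that is a homeomorphism onto its image) of $Z$ into $\mathbb{R}^2$. -/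
open Set Topology Filter

namespace MCylAux

variable {a b : ℝ}

/-- The gluing relation of the mapping cylinder. -/
def R (a b : ℝ) : ((Set.Ioo a b × unitInterval) ⊕ ℝ) → ((Set.Ioo a b × unitInterval) ⊕ ℝ) → Prop :=
  fun x y => ∃ u : Set.Ioo a b, x = Sum.inl (u, 1) ∧ y = Sum.inr (u : ℝ)

/-- An invariant of the relation. -/
def phi : ((Set.Ioo a b × unitInterval) ⊕ ℝ) → ℝ × ℝ :=
  Sum.elim (fun p => ((p.1 : ℝ), (p.2 : ℝ))) (fun c => (c, 1))

lemma phi_respects : ∀ x y, R a b x y → phi x = phi y := by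
  rintro x y ⟨u, rfl, rfl⟩
  simp [phi]

/-- The invariant descends to the quotient. -/
def Phi : Quot (R a b) → ℝ × ℝ := Quot.lift phi phi_respects

lemma class_eq {u : Set.Ioo a b} {t : unitInterval} (ht : (t : ℝ) < 1)
    {x : (Set.Ioo a b × unitInterval) ⊕ ℝ}
    (h : Quot.mk (R a b) x = Quot.mk (R a b) (Sum.inl (u, t))) :
    x = Sum.inl (u, t) := by
  have h2 : phi x = phi (Sum.inl (u, t)) := congrArg (Phi (a := a) (b := b)) h
  cases x with
  | inl p =>
      simp only [phi, Sum.elim_inl, Prod.mk.injEq] at h2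
      obtain ⟨h3, h4⟩ := h2
      congr 1
      ext <;> simpa
  | inr c =>
      exfalso
      simp only [phi, Sum.elim_inl, Sum.elim_inr, Prod.mk.injEq] at h2
      exact absurd h2.2.symm (ne_of_lt ht)

theorem main (a b : ℝ) (hab : a < b) :
    ¬ ∃ f : Quot (R a b) → ℝ × ℝ, Topology.IsEmbedding f := by
  rintro ⟨f, hf⟩
  haveI : FirstCountableTopology (Quot (R a b)) := hf.firstCountableTopology
  set x₀ : Quot (R a b) := Quot.mk _ (Sum.inr a) with hx₀
  obtain ⟨s, hs⟩ := (𝓝 x₀).exists_antitone_basis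
  -- in each basic neighborhood find a point of the open cylinder near the glued boundary point a
  have key : ∀ n : ℕ, ∃ (u : Set.Ioo a b) (t : unitInterval),
      (u : ℝ) ≤ a + (b - a) / (n + 2) ∧ (t : ℝ) < 1 ∧
      Quot.mk (R a b) (Sum.inl (u, t)) ∈ s n := by
    intro n
    have hsn : s n ∈ 𝓝 x₀ := hs.mem n
    obtain ⟨O, hOs, hO, hxO⟩ := mem_nhds_iff.mp hsn
    have hpre : IsOpen (Quot.mk (R a b) ⁻¹' O) := hO.preimage continuous_quot_mk
    have hinr : IsOpen (Sum.inr ⁻¹' (Quot.mk (R a b) ⁻¹' O) : Set ℝ) :=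
      (isOpen_sum_iff.mp hpre).2
    obtain ⟨δ, hδ, hball⟩ := Metric.isOpen_iff.mp hinr a hxO
    have hn2 : (0 : ℝ) < (n : ℝ) + 2 := by positivity
    set ε : ℝ := min (δ / 2) ((b - a) / (n + 2)) with hε
    have hε0 : 0 < ε := lt_min (by positivity) (div_pos (by linarith) hn2)
    have hε1 : ε ≤ δ / 2 := min_le_left _ _
    have hε2 : ε ≤ (b - a) / (n + 2) := min_le_right _ _
    have hub : (b - a) / ((n : ℝ) + 2) < b - a := by
      apply div_lt_self (by linarith)
      have : (0 : ℝ) ≤ (n : ℝ) := Nat.cast_nonneg n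
      linarith
    have hu : a + ε ∈ Set.Ioo a b := ⟨by linarith, by linarith⟩
    set u : Set.Ioo a b := ⟨a + ε, hu⟩ with hudef
    have hmemball : (a + ε : ℝ) ∈ Metric.ball a δ := by
      simp only [Metric.mem_ball, Real.dist_eq]
      rw [abs_of_pos (by linarith)]
      linarith
    have hinrO : Quot.mk (R a b) (Sum.inr (a + ε)) ∈ O := hball hmemball
    have hrel : Quot.mk (R a b) (Sum.inl (u, 1)) = Quot.mk (R a b) (Sum.inr ((u : ℝ))) :=
      Quot.sound ⟨u, rfl, rfl⟩
    have hinl1 : Sum.inl (u, (1 : unitInterval)) ∈ Quot.mk (R a b) ⁻¹' O := by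
      rw [Set.mem_preimage, hrel]
      exact hinrO
    have hinlO : IsOpen (Sum.inl ⁻¹' (Quot.mk (R a b) ⁻¹' O) :
        Set (Set.Ioo a b × unitInterval)) := (isOpen_sum_iff.mp hpre).1
    obtain ⟨ρ, hρ, hball2⟩ := Metric.isOpen_iff.mp hinlO (u, 1) hinl1
    have hmin : 0 < min ρ 1 := lt_min hρ one_pos
    have ht' : (1 : ℝ) - min ρ 1 / 2 ∈ unitInterval := by
      constructor
      · have : min ρ 1 ≤ 1 := min_le_right _ _
        linarith
      · linarith
    set t : unitInterval := ⟨1 - min ρ 1 / 2, ht'⟩ with htdef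
    have htb : (u, t) ∈ Metric.ball ((u, (1 : unitInterval)) : Set.Ioo a b × unitInterval) ρ := by
      simp only [Metric.mem_ball, Prod.dist_eq, Subtype.dist_eq, htdef]
      have h1 : dist (u : ℝ) (u : ℝ) = 0 := dist_self _
      have h2 : dist (1 - min ρ 1 / 2 : ℝ) ((1 : unitInterval) : ℝ) = min ρ 1 / 2 := by
        rw [Set.Icc.coe_one, Real.dist_eq, abs_of_nonpos (by linarith)]
        ring
      rw [h1, h2]
      have : min ρ 1 ≤ ρ := min_le_left _ _
      rw [max_lt_iff]
      exact ⟨hρ, by linarith⟩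
    refine ⟨u, t, ?_, ?_, ?_⟩
    · show a + ε ≤ a + (b - a) / (n + 2)
      linarith
    · show (1 : ℝ) - min ρ 1 / 2 < 1
      linarith
    · exact hOs (hball2 htb)
  choose u t hu_le ht_lt hmem using key
  -- the bad points
  set bad : ℕ → Quot (R a b) := fun n => Quot.mk (R a b) (Sum.inl (u n, t n)) with hbad
  set V : Set (Quot (R a b)) := {z | ∀ n, z ≠ bad n} with hV
  -- the family of bad points in the cylinder is locally finite, hence its union is closed
  have hclosed : IsClosed (⋃ n, ({(u n, t n)} : Set (Set.Ioo a b × unitInterval))) := by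
    apply LocallyFinite.isClosed_iUnion
    · intro p
      refine ⟨{q : Set.Ioo a b × unitInterval | (a + (p.1 : ℝ)) / 2 < (q.1 : ℝ)}, ?_, ?_⟩
      · have hopen : IsOpen {q : Set.Ioo a b × unitInterval | (a + (p.1 : ℝ)) / 2 < (q.1 : ℝ)} :=
          isOpen_Ioi.preimage (continuous_subtype_val.comp continuous_fst)
        have hpmem : (a + (p.1 : ℝ)) / 2 < (p.1 : ℝ) := by
          have := p.1.2.1
          linarith
        exact hopen.mem_nhds hpmem
      · have hc : a < (p.1 : ℝ) := p.1.2.1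
        obtain ⟨N, hN⟩ := exists_nat_ge (2 * (b - a) / ((p.1 : ℝ) - a))
        apply Set.Finite.subset (Set.finite_Iio N)
        intro n hn
        obtain ⟨q, hq1, hq2⟩ := hn
        rw [Set.mem_singleton_iff] at hq1
        subst hq1
        simp only [Set.mem_setOf_eq] at hq2
        -- hq2 : (a + p.1)/2 < u n
        by_contra hcon
        simp only [Set.mem_Iio, not_lt] at hcon
        have hNn : (N : ℝ) ≤ (n : ℝ) := by exact_mod_cast hcon
        have h2 : (u n : ℝ) ≤ a + (b - a) / (n + 2) := hu_le n
        have hn2 : (0 : ℝ) < (n : ℝ) + 2 := by positivity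
        have h3 : ((p.1 : ℝ) - a) / 2 < (b - a) / ((n : ℝ) + 2) := by linarith
        have h4 : ((p.1 : ℝ) - a) * ((n : ℝ) + 2) < 2 * (b - a) := by
          rw [div_lt_div_iff₀ (by norm_num) hn2] at h3
          linarith
        have h5 : 2 * (b - a) / ((p.1 : ℝ) - a) ≤ (n : ℝ) := le_trans hN hNn
        have h6 : 2 * (b - a) ≤ (n : ℝ) * ((p.1 : ℝ) - a) := by
          rw [div_le_iff₀ (by linarith)] at h5
          linarith
        nlinarith
    · intro n
      exact isClosed_singleton
  -- the preimage of V
  have hpreV : Quot.mk (R a b) ⁻¹' V =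
      (⋃ n, ({Sum.inl (u n, t n)} : Set ((Set.Ioo a b × unitInterval) ⊕ ℝ)))ᶜ := by
    ext x
    simp only [Set.mem_preimage, hV, Set.mem_setOf_eq, Set.mem_compl_iff, Set.mem_iUnion,
      Set.mem_singleton_iff, not_exists]
    constructor
    · intro h n hx
      exact h n (by rw [hx])
    · intro h n hEq
      exact h n (class_eq (ht_lt n) hEq)
  have hVopen : IsOpen V := by
    rw [← isQuotientMap_quot_mk.isOpen_preimage, hpreV, isOpen_compl_iff]
    rw [← isOpen_compl_iff, isOpen_sum_iff]
    constructor
    · have : (Sum.inl ⁻¹'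
          (⋃ n, ({Sum.inl (u n, t n)} : Set ((Set.Ioo a b × unitInterval) ⊕ ℝ)))ᶜ :
          Set (Set.Ioo a b × unitInterval)) =
          (⋃ n, ({(u n, t n)} : Set (Set.Ioo a b × unitInterval)))ᶜ := by
        ext q
        simp
      rw [this]
      exact hclosed.isOpen_compl
    · have : (Sum.inr ⁻¹'
          (⋃ n, ({Sum.inl (u n, t n)} : Set ((Set.Ioo a b × unitInterval) ⊕ ℝ)))ᶜ :
          Set ℝ) = Set.univ := by
        ext c
        simp
      rw [this]
      exact isOpen_univ
  have hx₀V : x₀ ∈ V := by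
    intro n hEq
    have := class_eq (ht_lt n) (hx₀ ▸ hEq)
    exact absurd this (by simp)
  have hVnhds : V ∈ 𝓝 x₀ := hVopen.mem_nhds hx₀V
  obtain ⟨n, -, hsV⟩ := hs.toHasBasis.mem_iff.mp hVnhds
  exact hsV (hmem n) n rfl

end MCylAux

/-- The mapping cylinder of the inclusion of a bounded open interval `(a, b)` into `ℝ`:
the quotient of `((a, b) × [0, 1]) ⊕ ℝ` identifying `(u, 1)` with `u ∈ ℝ`, with the
quotient topology. It admits no topological embedding into `ℝ²`. -/
theorem mappingCylinder_Ioo_not_embeddable_in_plane (a b : ℝ) (hab : a < b) :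
    ¬ ∃ f : Quot (fun x y : (Set.Ioo a b × unitInterval) ⊕ ℝ =>
        ∃ u : Set.Ioo a b, x = Sum.inl (u, 1) ∧ y = Sum.inr (u : ℝ)) → ℝ × ℝ,
      Topology.IsEmbedding f := by
  exact MCylAux.main a b hab
end

section
/- With $W_0 \subset W_1 \subset \mathbb{R}^2$ as defined in the context, the inclusion $W_0 \to W_1$ is isotopic through smooth embeddings to a diffeomorphism. That is, there exists a map $H \colon [0,1] \times W_0 \to \mathbb{R}^2$ which is jointly continuous, such that for every $t \in [0,1]$ the map $H_t := H(t, -) \colon W_0 \to \mathbb{R}^2$ is an injective smooth ($C^\infty$) open map with image contained in $W_1$, such that $H_0$ is the inclusion $W_0 \hookrightarrow W_1$, and such that $H_1$ is a diffeomorphism from $W_0$ onto $W_1$ (a smooth bijection onto $W_1$ whose inverse is smooth). -/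
noncomputable section IsoAux

def Iv (i : ℕ) : Set ℝ := Set.Ioo ((2:ℝ) ^ (-(i:ℤ) - 1)) ((2:ℝ) ^ (-(i:ℤ)))

lemma Iv_aux {x : ℝ} {i j : ℕ} (h : i < j) (hi : x ∈ Iv i) (hj : x ∈ Iv j) : False := by
  have he : (-(j:ℤ)) ≤ -(i:ℤ) - 1 := by omega
  have : (2:ℝ) ^ (-(j:ℤ)) ≤ (2:ℝ) ^ (-(i:ℤ) - 1) := zpow_le_zpow_right₀ one_le_two he
  linarith [hi.1, hj.2]

lemma Iv_uniq {x : ℝ} {i j : ℕ} (hi : x ∈ Iv i) (hj : x ∈ Iv j) : i = j := by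
  rcases lt_trichotomy i j with h | h | h
  · exact absurd (Iv_aux h hi hj) (by simp)
  · exact h
  · exact absurd (Iv_aux h hj hi) (by simp)

open Classical in
def idx (x : ℝ) : ℕ := if h : ∃ i, x ∈ Iv i then h.choose else 0

lemma idx_eq {x : ℝ} {i : ℕ} (hx : x ∈ Iv i) : idx x = i := by
  have h : ∃ j, x ∈ Iv j := ⟨i, hx⟩
  rw [idx, dif_pos h]
  exact Iv_uniq h.choose_spec hx

/-- scaling factor -/
def cf (i : ℕ) : ℝ := 2 ^ (i + 1)

lemma cf_pos (i : ℕ) : 0 < cf i := by unfold cf; positivity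

lemma one_le_cf (i : ℕ) : 1 ≤ cf i := one_le_pow₀ one_le_two

lemma cf_inv (i : ℕ) : (2:ℝ) ^ (-(i:ℤ) - 1) = (cf i)⁻¹ := by
  rw [cf, ← zpow_natCast (2:ℝ) (i+1), ← zpow_neg]
  congr 1
  omega

/-- The isotopy. -/
def Hmap (t : ℝ) (p : ℝ × ℝ) : ℝ × ℝ := (p.1, p.2 * (cf (idx p.1)) ^ t)

/-- The model map on component `i`. -/
def Lmap (i : ℕ) (t : ℝ) (p : ℝ × ℝ) : ℝ × ℝ := (p.1, p.2 * (cf i) ^ t)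

lemma Hmap_eq_on {i : ℕ} {t : ℝ} {p : ℝ × ℝ} (hp : p.1 ∈ Iv i) :
    Hmap t p = Lmap i t p := by
  simp [Hmap, Lmap, idx_eq hp]

/-- component of W₀ -/
def C0 (i : ℕ) : Set (ℝ × ℝ) := Iv i ×ˢ Set.Ioo (0:ℝ) ((2:ℝ) ^ (-(i:ℤ) - 1))

/-- component of W₁ -/
def C1 (i : ℕ) : Set (ℝ × ℝ) := Iv i ×ˢ Set.Ioo (0:ℝ) 1

lemma isOpen_C0 (i : ℕ) : IsOpen (C0 i) := isOpen_Ioo.prod isOpen_Ioo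

lemma isOpen_C1 (i : ℕ) : IsOpen (C1 i) := isOpen_Ioo.prod isOpen_Ioo

lemma Lmap_homeo (i : ℕ) (t : ℝ) :
    ∃ e : (ℝ × ℝ) ≃ₜ (ℝ × ℝ), ∀ p, e p = Lmap i t p := by
  refine ⟨(Homeomorph.refl ℝ).prodCongr
    (Homeomorph.mulRight₀ ((cf i) ^ t) (Real.rpow_pos_of_pos (cf_pos i) t).ne'), fun p => rfl⟩

lemma Lmap_contDiff (i : ℕ) (t : ℝ) : ContDiff ℝ (⊤ : ℕ∞) (Lmap i t) :=
  contDiff_fst.prodMk (contDiff_snd.mul contDiff_const)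

end IsoAux

/-- With `W₁ = ⋃ᵢ (2^{-i-1}, 2^{-i}) × (0, 1)` and
`W₀ = ⋃ᵢ (2^{-i-1}, 2^{-i}) × (0, 2^{-i-1})` in `ℝ²`, the inclusion `W₀ → W₁` is
isotopic through smooth embeddings to a diffeomorphism: there is a jointly continuous
`H : [0,1] × W₀ → ℝ²` such that each `H t` is an injective smooth open map with image
in `W₁`, `H 0` is the inclusion, and `H 1` is a diffeomorphism onto `W₁`. -/
theorem inclusion_isotopic_to_diffeomorphism :
    let W₁ : Set (ℝ × ℝ) :=
      ⋃ i : ℕ, Set.Ioo ((2:ℝ) ^ (-(i:ℤ) - 1)) ((2:ℝ) ^ (-(i:ℤ))) ×ˢ Set.Ioo (0:ℝ) 1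
    let W₀ : Set (ℝ × ℝ) :=
      ⋃ i : ℕ, Set.Ioo ((2:ℝ) ^ (-(i:ℤ) - 1)) ((2:ℝ) ^ (-(i:ℤ))) ×ˢ
        Set.Ioo (0:ℝ) ((2:ℝ) ^ (-(i:ℤ) - 1))
    ∃ H : ℝ → (ℝ × ℝ) → (ℝ × ℝ),
      -- jointly continuous on `[0,1] × W₀`
      ContinuousOn (fun p : ℝ × (ℝ × ℝ) => H p.1 p.2) (Set.Icc (0:ℝ) 1 ×ˢ W₀) ∧
      -- each `H t` is an injective smooth open map with image contained in `W₁`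
      (∀ t ∈ Set.Icc (0:ℝ) 1,
        Set.InjOn (H t) W₀ ∧
        ContDiffOn ℝ (⊤ : ℕ∞) (H t) W₀ ∧
        (∀ V ⊆ W₀, IsOpen V → IsOpen (H t '' V)) ∧
        H t '' W₀ ⊆ W₁) ∧
      -- `H 0` is the inclusion of `W₀` in `W₁`
      (∀ x ∈ W₀, H 0 x = x) ∧
      -- `H 1` is a diffeomorphism from `W₀` onto `W₁`
      H 1 '' W₀ = W₁ ∧
      (∃ g : (ℝ × ℝ) → (ℝ × ℝ),
        ContDiffOn ℝ (⊤ : ℕ∞) g W₁ ∧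
        (∀ x ∈ W₀, g (H 1 x) = x) ∧
        (∀ y ∈ W₁, H 1 (g y) = y)) := by
  intro W₁ W₀
  have hW₀ : W₀ = ⋃ i, C0 i := rfl
  have hW₁ : W₁ = ⋃ i, C1 i := rfl
  refine ⟨Hmap, ?_, ?_, ?_, ?_, ?_⟩
  · -- joint continuity
    intro q hq
    obtain ⟨hq1, hq2⟩ := hq
    rw [hW₀, Set.mem_iUnion] at hq2
    obtain ⟨i, hi⟩ := hq2
    have hnb : (Set.univ ×ˢ C0 i : Set (ℝ × (ℝ × ℝ))) ∈ nhds q :=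
      (isOpen_univ.prod (isOpen_C0 i)).mem_nhds ⟨trivial, hi⟩
    have hc : Continuous fun s : ℝ => (cf i) ^ s :=
      continuous_iff_continuousAt.mpr fun s => Real.continuousAt_const_rpow (cf_pos i).ne'
    have hG : ContinuousAt (fun p : ℝ × (ℝ × ℝ) => Lmap i p.1 p.2) q := by
      apply Continuous.continuousAt
      refine (continuous_fst.comp continuous_snd).prodMk ?_
      exact (continuous_snd.comp continuous_snd).mul (hc.comp continuous_fst)
    refine (hG.congr ?_).continuousWithinAt
    filter_upwards [hnb] with p hp
    exact (Hmap_eq_on hp.2.1).symm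
  · -- each time slice
    intro t ht
    refine ⟨?_, ?_, ?_, ?_⟩
    · -- injective
      intro p hp q hq hpq
      rw [hW₀, Set.mem_iUnion] at hp hq
      obtain ⟨i, hpi⟩ := hp; obtain ⟨j, hqj⟩ := hq
      have h1 := congrArg Prod.fst hpq
      simp only [Hmap] at h1
      have hij : i = j := Iv_uniq hpi.1 (by rw [h1]; exact hqj.1)
      subst hij
      have h2 := congrArg Prod.snd hpq
      rw [Hmap_eq_on hpi.1, Hmap_eq_on hqj.1] at h2
      simp only [Lmap] at h2
      have hpos : (0:ℝ) < (cf i) ^ t := Real.rpow_pos_of_pos (cf_pos i) t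
      exact Prod.ext h1 (mul_right_cancel₀ hpos.ne' h2)
    · -- smooth
      intro p hp
      rw [hW₀, Set.mem_iUnion] at hp
      obtain ⟨i, hi⟩ := hp
      have : ContDiffAt ℝ (⊤ : ℕ∞) (Hmap t) p := by
        refine ((Lmap_contDiff i t).contDiffAt).congr_of_eventuallyEq ?_
        filter_upwards [(isOpen_C0 i).mem_nhds hi] with q hq
        exact Hmap_eq_on hq.1
      exact this.contDiffWithinAt
    · -- open map
      intro V hV hVopen
      have : Hmap t '' V = ⋃ i, Hmap t '' (V ∩ C0 i) := by
        rw [← Set.image_iUnion, ← Set.inter_iUnion, ← hW₀,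
          Set.inter_eq_self_of_subset_left hV]
      rw [this]
      refine isOpen_iUnion fun i => ?_
      obtain ⟨e, he⟩ := Lmap_homeo i t
      have himg : Hmap t '' (V ∩ C0 i) = e '' (V ∩ C0 i) := by
        apply Set.image_congr
        intro p hp
        rw [he p, Hmap_eq_on hp.2.1]
      rw [himg]
      exact e.isOpenMap _ (hVopen.inter (isOpen_C0 i))
    · -- image in W₁
      rintro y ⟨p, hp, rfl⟩
      rw [hW₀, Set.mem_iUnion] at hp
      obtain ⟨i, hi⟩ := hp
      rw [hW₁, Set.mem_iUnion]
      refine ⟨i, ?_⟩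
      rw [Hmap_eq_on hi.1]
      refine ⟨hi.1, mul_pos hi.2.1 (Real.rpow_pos_of_pos (cf_pos i) t), ?_⟩
      have h1 : (cf i) ^ t ≤ cf i := by
        calc (cf i) ^ t ≤ (cf i) ^ (1:ℝ) :=
          Real.rpow_le_rpow_of_exponent_le (one_le_cf i) ht.2
        _ = cf i := Real.rpow_one _
      have h2 : p.2 < (cf i)⁻¹ := by rw [← cf_inv]; exact hi.2.2
      calc p.2 * (cf i) ^ t ≤ p.2 * cf i :=
            mul_le_mul_of_nonneg_left h1 (le_of_lt hi.2.1)
        _ < (cf i)⁻¹ * cf i := by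
            exact mul_lt_mul_of_pos_right h2 (cf_pos i)
        _ = 1 := inv_mul_cancel₀ (cf_pos i).ne'
  · -- H 0 = inclusion
    intro p _
    simp [Hmap, Real.rpow_zero]
  · -- H 1 surjective onto W₁
    apply Set.eq_of_subset_of_subset
    · rintro y ⟨p, hp, rfl⟩
      rw [hW₀, Set.mem_iUnion] at hp
      obtain ⟨i, hi⟩ := hp
      rw [hW₁, Set.mem_iUnion]
      refine ⟨i, ?_⟩
      rw [Hmap_eq_on hi.1, Lmap, Real.rpow_one]
      refine ⟨hi.1, mul_pos hi.2.1 (cf_pos i), ?_⟩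
      have h2 : p.2 < (cf i)⁻¹ := by rw [← cf_inv]; exact hi.2.2
      calc p.2 * cf i < (cf i)⁻¹ * cf i := mul_lt_mul_of_pos_right h2 (cf_pos i)
        _ = 1 := inv_mul_cancel₀ (cf_pos i).ne'
    · intro y hy
      rw [hW₁, Set.mem_iUnion] at hy
      obtain ⟨i, hi⟩ := hy
      refine ⟨(y.1, y.2 * (cf i)⁻¹), ?_, ?_⟩
      · rw [hW₀, Set.mem_iUnion]
        refine ⟨i, hi.1, mul_pos hi.2.1 (inv_pos.mpr (cf_pos i)), ?_⟩
        rw [cf_inv]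
        calc y.2 * (cf i)⁻¹ < 1 * (cf i)⁻¹ :=
              mul_lt_mul_of_pos_right hi.2.2 (inv_pos.mpr (cf_pos i))
          _ = (cf i)⁻¹ := one_mul _
      · have : ((y.1, y.2 * (cf i)⁻¹) : ℝ × ℝ).1 ∈ Iv i := hi.1
        rw [Hmap_eq_on this, Lmap, Real.rpow_one]
        simp only
        rw [mul_assoc, inv_mul_cancel₀ (cf_pos i).ne', mul_one]
  · -- inverse
    refine ⟨fun p => (p.1, p.2 * (cf (idx p.1))⁻¹), ?_, ?_, ?_⟩
    · intro p hp
      rw [hW₁, Set.mem_iUnion] at hp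
      obtain ⟨i, hi⟩ := hp
      have : ContDiffAt ℝ (⊤ : ℕ∞) (fun p : ℝ × ℝ => (p.1, p.2 * (cf (idx p.1))⁻¹)) p := by
        have hL : ContDiff ℝ (⊤ : ℕ∞) (fun p : ℝ × ℝ => (p.1, p.2 * (cf i)⁻¹)) :=
          contDiff_fst.prodMk (contDiff_snd.mul contDiff_const)
        refine hL.contDiffAt.congr_of_eventuallyEq ?_
        filter_upwards [(isOpen_C1 i).mem_nhds hi] with q hq
        simp [idx_eq hq.1]
      exact this.contDiffWithinAt
    · intro p hp
      rw [hW₀, Set.mem_iUnion] at hp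
      obtain ⟨i, hi⟩ := hp
      rw [Hmap_eq_on hi.1, Lmap, Real.rpow_one]
      simp only [idx_eq hi.1]
      rw [mul_assoc, mul_inv_cancel₀ (cf_pos i).ne', mul_one]
    · intro y hy
      rw [hW₁, Set.mem_iUnion] at hy
      obtain ⟨i, hi⟩ := hy
      have h1 : ((y.1, y.2 * (cf (idx y.1))⁻¹) : ℝ × ℝ).1 ∈ Iv i := hi.1
      rw [Hmap_eq_on h1, Lmap, Real.rpow_one]
      simp only [idx_eq hi.1]
      rw [mul_assoc, inv_mul_cancel₀ (cf_pos i).ne', mul_one]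
end
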